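/- Let ψ = φ^⟨-1⟩ be the compositional inverse of φ, let χ = ψ/(h∘ψ) (the power series ψ multiplied by the multiplicative inverse of h∘ψ), and let B be an upper triangular matrix satisfying A·B = B·A = I. Then for every nonnegative integer s and all 1 ≤ k ≤ n, [B^s]_{k,n} = (a_k/a_n)·(1/k!)·(d/dt)^n_{t=0}[ (χ^⟨s⟩(t))^k · ( ∏_{i=0}^{s-1} g(ψ(χ^⟨i⟩(t))) )^{-1} ], where the empty product (s = 0) equals 1 and the outer inverse is the multiplicative inverse of a power series with nonzero constant term. -/

import Mathlib

open PowerSeries Finset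

noncomputable section

/-- Product of two infinite matrices of complex numbers (indexed by positive integers,
upper triangular): `[A·B]_{k,n} = ∑_{j=k}^{n} [A]_{k,j}·[B]_{j,n}`. -/
def triMul (A B : ℕ → ℕ → ℂ) : ℕ → ℕ → ℂ :=
  fun k n => ∑ j ∈ Finset.Icc k n, A k j * B j n

/-- The identity matrix. -/
def triId : ℕ → ℕ → ℂ := fun k n => if k = n then 1 else 0

/-- Powers of a matrix: `A^0 = I`, `A^{s+1} = A^s · A`. -/
def triPow (A : ℕ → ℕ → ℂ) : ℕ → ℕ → ℕ → ℂ
  | 0 => triId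
  | s + 1 => triMul (triPow A s) A

/-- Composition `F ∘ G` of formal power series (intended for `G` with zero
constant coefficient): the coefficient of `t^n` is `∑_{j=0}^{n} F_j · [t^n](G^j)`. -/
def psComp (F G : PowerSeries ℂ) : PowerSeries ℂ :=
  PowerSeries.mk fun n =>
    ∑ j ∈ Finset.range (n + 1), (PowerSeries.coeff j F) * (PowerSeries.coeff n (G ^ j))

/-- Iterated composition: `φ^⟨0⟩ = t`, `φ^⟨s+1⟩ = φ^⟨s⟩ ∘ φ`. -/
def iterComp (φ : PowerSeries ℂ) : ℕ → PowerSeries ℂ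
  | 0 => PowerSeries.X
  | s + 1 => psComp (iterComp φ s) φ

/-!
Put `χ = ψ / (h ∘ ψ)` and `E_s = (χ^⟨s⟩)^k · (∏_{i<s} g ∘ ψ ∘ χ^⟨i⟩)⁻¹`, and let `M_s` be the
matrix with entries `(a_k / a_n) (n! / k!) [t^n] E_s`. Since `M_0 = I`, it suffices to show
`M_{s+1} A = M_s`: then `B^s = M_s` by induction, as `M_s B = M_{s+1} A B = M_{s+1}`.

By linearity, `∑_l [t^l] F · [t^{n-1}] h^n (φ^l g)' = [t^{n-1}] h^n ((F ∘ φ) g)'`. Because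
`ψ ∘ φ = t`, one has `χ ∘ φ = t / h`, hence `(E_{s+1} ∘ φ) · g = E_s ∘ (t / h)`. What remains is
the Lagrange-type identity `[t^{n-1}] h^n (W ∘ (t / h))' = n [t^n] W`, which by linearity only
has to be checked for `W = t^j`, where Leibniz' rule applied to `(t / h)^j · h^n = t^j h^{n-j}`
does it.
-/

namespace PowerSeries

section CommRing

variable {R : Type*} [CommRing R]

theorem coeff_pow_mul_eq_zero_of_lt {G : R⟦X⟧} (hG : constantCoeff G = 0) (V : R⟦X⟧)
    {j m : ℕ} (h : m < j) : coeff m (G ^ j * V) = 0 := by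
  obtain ⟨q, rfl⟩ := X_dvd_iff.2 hG
  rw [mul_pow, mul_assoc, coeff_X_pow_mul', if_neg (by omega)]

theorem coeff_pow_eq_zero_of_lt {G : R⟦X⟧} (hG : constantCoeff G = 0) {j m : ℕ} (h : m < j) :
    coeff m (G ^ j) = 0 := by
  simpa using coeff_pow_mul_eq_zero_of_lt hG 1 h

theorem trunc_subst_trunc {φ : R⟦X⟧} (hφ : constantCoeff φ = 0) (F : R⟦X⟧) (N : ℕ) :
    trunc N ((trunc N F : R⟦X⟧).subst φ) = trunc N (F.subst φ) := by
  have hφ' := HasSubst.of_constantCoeff_zero' hφ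
  ext m
  simp only [coeff_trunc]
  split_ifs
  · rw [coeff_subst' hφ', coeff_subst' hφ']
    refine finsum_congr fun d ↦ ?_
    rcases lt_or_ge d N with hd | hd
    · rw [coeff_coe_trunc_of_lt hd]
    · rw [coeff_pow_eq_zero_of_lt hφ (by omega), smul_zero, smul_zero]
  · rfl

theorem subst_coe_trunc {φ : R⟦X⟧} (hφ : constantCoeff φ = 0) (F : R⟦X⟧) (N : ℕ) :
    (trunc N F : R⟦X⟧).subst φ = ∑ l ∈ range N, C (coeff l F) * φ ^ l := by
  rw [subst_coe (HasSubst.of_constantCoeff_zero' hφ), Polynomial.aeval_def,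
    eval₂_trunc_eq_sum_range]
  rfl

theorem coeff_mul_derivative_congr {P Q : R⟦X⟧} {n : ℕ} (h : trunc (n + 2) P = trunc (n + 2) Q)
    (H : R⟦X⟧) : coeff n (H * d⁄dX R P) = coeff n (H * d⁄dX R Q) := by
  rw [coeff_mul_eq_coeff_trunc_mul_trunc _ _ n.lt_succ_self,
    coeff_mul_eq_coeff_trunc_mul_trunc _ (d⁄dX R Q) n.lt_succ_self,
    trunc_derivative, trunc_derivative, h]

theorem coeff_mul_derivative_subst_mul {φ : R⟦X⟧} (hφ : constantCoeff φ = 0) (F g H : R⟦X⟧)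
    (n : ℕ) : coeff n (H * d⁄dX R (F.subst φ * g)) =
      ∑ l ∈ range (n + 2), coeff l F * coeff n (H * d⁄dX R (φ ^ l * g)) := by
  have htrunc : trunc (n + 2) (F.subst φ * g) =
      trunc (n + 2) ((trunc (n + 2) F : R⟦X⟧).subst φ * g) := by
    rw [← trunc_trunc_mul, ← trunc_subst_trunc hφ, trunc_trunc_mul]
  rw [coeff_mul_derivative_congr htrunc, subst_coe_trunc hφ, sum_mul, map_sum, mul_sum, map_sum]
  refine sum_congr rfl fun l _ ↦ ?_
  rw [mul_assoc, ← smul_eq_C_mul, Derivation.map_smul, mul_smul_comm, LinearMap.map_smul,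
    smul_eq_mul]

end CommRing

section Lagrange

variable {K : Type*} [Field K] [CharZero K]

theorem coeff_pow_mul_derivative (f : K⟦X⟧) (m : ℕ) :
    coeff m (f ^ m * d⁄dX K f) = coeff (m + 1) (f ^ (m + 1)) := by
  have h := coeff_derivative (f ^ (m + 1)) m
  rw [derivative_pow, Nat.add_sub_cancel, mul_assoc, ← map_natCast (C (R := K)), coeff_C_mul]
    at h
  have hm : ((m + 1 : ℕ) : K) ≠ 0 := Nat.cast_ne_zero.2 m.succ_ne_zero
  apply mul_left_cancel₀ hm
  rw [h]; push_cast; ring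

theorem coeff_pow_mul_derivative_X_mul_inv_pow {h : K⟦X⟧} (hh : constantCoeff h ≠ 0)
    {n j : ℕ} (hj : j ≤ n + 1) :
    coeff n (h ^ (n + 1) * d⁄dX K ((X * h⁻¹) ^ j)) = if j = n + 1 then (n + 1 : K) else 0 := by
  have hcancel : ∀ i, (X * h⁻¹) ^ j * h ^ (i + j) = X ^ j * h ^ i := fun i ↦ by
    rw [pow_add, mul_pow, mul_mul_mul_comm, ← mul_pow, PowerSeries.inv_mul_cancel h hh, one_pow,
      mul_one]
  have hleib : coeff n (h ^ (n + 1) * d⁄dX K ((X * h⁻¹) ^ j)) =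
      coeff n (d⁄dX K ((X * h⁻¹) ^ j * h ^ (n + 1))) -
        coeff n ((X * h⁻¹) ^ j * d⁄dX K (h ^ (n + 1))) := by
    rw [Derivation.leibniz, smul_eq_mul, smul_eq_mul, map_add]; ring
  rw [hleib, coeff_derivative]
  rcases hj.eq_or_lt with rfl | hlt
  · have hX : (X * h⁻¹) ^ (n + 1) * h ^ (n + 1) = X ^ (n + 1) := by
      simpa using hcancel 0
    rw [hX, coeff_pow_mul_eq_zero_of_lt (by simp) _ n.lt_succ_self]
    simp
  · obtain ⟨i, rfl⟩ : ∃ i, n = i + j := ⟨n - j, by omega⟩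
    have hprod : (X * h⁻¹) ^ j * d⁄dX K (h ^ (i + j + 1)) =
        C ((i + j + 1 : ℕ) : K) * (X ^ j * (h ^ i * d⁄dX K h)) := by
      rw [derivative_pow, map_natCast, Nat.add_sub_cancel]
      linear_combination (((i + j + 1 : ℕ) : K⟦X⟧) * d⁄dX K h) * hcancel i
    rw [hprod, show i + j + 1 = i + 1 + j by ring, hcancel, coeff_C_mul, coeff_X_pow_mul',
      coeff_X_pow_mul', if_pos (by omega), if_pos (by omega), if_neg (by omega),
      show i + 1 + j - j = i + 1 by omega, show i + j - j = i by omega,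
      coeff_pow_mul_derivative]
    push_cast; ring

theorem coeff_pow_mul_derivative_subst_X_mul_inv {h : K⟦X⟧} (hh : constantCoeff h ≠ 0)
    (W : K⟦X⟧) (n : ℕ) :
    coeff n (h ^ (n + 1) * d⁄dX K (W.subst (X * h⁻¹))) = (n + 1) * coeff (n + 1) W := by
  have hsum := coeff_mul_derivative_subst_mul (φ := X * h⁻¹) (by simp) W 1 (h ^ (n + 1)) n
  simp only [mul_one] at hsum
  rw [hsum, sum_eq_single_of_mem (n + 1) (by simp)]
  · rw [coeff_pow_mul_derivative_X_mul_inv_pow hh le_rfl, if_pos rfl, mul_comm]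
  · intro l hl hne
    rw [coeff_pow_mul_derivative_X_mul_inv_pow hh (Nat.lt_succ_iff.1 (mem_range.1 hl)),
      if_neg hne, mul_zero]

end Lagrange

end PowerSeries

section Composition

theorem constantCoeff_psComp (F G : ℂ⟦X⟧) : constantCoeff (psComp F G) = constantCoeff F := by
  rw [← coeff_zero_eq_constantCoeff_apply, ← coeff_zero_eq_constantCoeff_apply, psComp, coeff_mk]
  simp

theorem psComp_eq_subst {F G : ℂ⟦X⟧} (hG : constantCoeff G = 0) : psComp F G = F.subst G := by
  ext n
  rw [psComp, coeff_mk, coeff_subst' (HasSubst.of_constantCoeff_zero' hG),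
    finsum_eq_sum_of_support_subset (s := range (n + 1))]
  · simp only [smul_eq_mul]
  · intro d hd
    by_contra hdn
    simp only [coe_range, Set.mem_Iio, not_lt] at hdn
    exact hd (by simp only; rw [coeff_pow_eq_zero_of_lt hG (by omega), smul_zero])

variable {G : ℂ⟦X⟧}

theorem psComp_eq_substAlgHom (hG : constantCoeff G = 0) (F : ℂ⟦X⟧) :
    psComp F G = substAlgHom (HasSubst.of_constantCoeff_zero' hG) F := by
  rw [psComp_eq_subst hG, coe_substAlgHom]

theorem psComp_X_right (F : ℂ⟦X⟧) : psComp F X = F := by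
  rw [psComp_eq_subst constantCoeff_X, X_subst]

theorem psComp_mul (hG : constantCoeff G = 0) (F₁ F₂ : ℂ⟦X⟧) :
    psComp (F₁ * F₂) G = psComp F₁ G * psComp F₂ G := by
  simp only [psComp_eq_substAlgHom hG, map_mul]

theorem psComp_pow (hG : constantCoeff G = 0) (F : ℂ⟦X⟧) (k : ℕ) :
    psComp (F ^ k) G = psComp F G ^ k := by
  simp only [psComp_eq_substAlgHom hG, map_pow]

theorem psComp_prod (hG : constantCoeff G = 0) {ι : Type*} (t : Finset ι) (f : ι → ℂ⟦X⟧) :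
    psComp (∏ i ∈ t, f i) G = ∏ i ∈ t, psComp (f i) G := by
  simp only [psComp_eq_substAlgHom hG, map_prod]

theorem psComp_inv (hG : constantCoeff G = 0) {F : ℂ⟦X⟧} (hF : constantCoeff F ≠ 0) :
    psComp F⁻¹ G = (psComp F G)⁻¹ := by
  rw [PowerSeries.eq_inv_iff_mul_eq_one (by rwa [constantCoeff_psComp]), ← psComp_mul hG,
    PowerSeries.inv_mul_cancel F hF, psComp_eq_substAlgHom hG, map_one]

theorem psComp_assoc {H : ℂ⟦X⟧} (hG : constantCoeff G = 0) (hH : constantCoeff H = 0)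
    (F : ℂ⟦X⟧) : psComp (psComp F G) H = psComp F (psComp G H) := by
  have hGH : constantCoeff (psComp G H) = 0 := by rw [constantCoeff_psComp, hG]
  rw [psComp_eq_subst hG, psComp_eq_subst hGH, psComp_eq_subst hH, psComp_eq_subst hH,
    subst_comp_subst_apply (HasSubst.of_constantCoeff_zero' hG)
      (HasSubst.of_constantCoeff_zero' hH)]

theorem psComp_psComp_of_psComp_eq_X {ψ φ : ℂ⟦X⟧} (hψ : constantCoeff ψ = 0)
    (hφ : constantCoeff φ = 0) (hψφ : psComp ψ φ = X) (F : ℂ⟦X⟧) :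
    psComp (psComp F ψ) φ = F := by
  rw [psComp_assoc hψ hφ, hψφ, psComp_X_right]

theorem psComp_mul_inv_psComp_of_psComp_eq_X {ψ φ : ℂ⟦X⟧} (hψ : constantCoeff ψ = 0)
    (hφ : constantCoeff φ = 0) (hψφ : psComp ψ φ = X) {h : ℂ⟦X⟧} (hh : constantCoeff h ≠ 0) :
    psComp (ψ * (psComp h ψ)⁻¹) φ = X * h⁻¹ := by
  rw [psComp_mul hφ, hψφ, psComp_inv hφ (by rwa [constantCoeff_psComp]),
    psComp_psComp_of_psComp_eq_X hψ hφ hψφ]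

end Composition

section Iteration

variable {χ φ u : ℂ⟦X⟧}

theorem constantCoeff_iterComp (i : ℕ) :
    constantCoeff (iterComp χ i) = 0 := by
  induction i with
  | zero => exact constantCoeff_X
  | succ i ih => rw [iterComp, constantCoeff_psComp, ih]

theorem psComp_iterComp_succ (hχ : constantCoeff χ = 0) (hφ : constantCoeff φ = 0)
    (hχφ : psComp χ φ = u) (i : ℕ) :
    psComp (iterComp χ (i + 1)) φ = psComp (iterComp χ i) u := by
  rw [iterComp, psComp_assoc hχ hφ, hχφ]

theorem psComp_prod_psComp_iterComp (hχ : constantCoeff χ = 0) (hφ : constantCoeff φ = 0)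
    (hu : constantCoeff u = 0) (hχφ : psComp χ φ = u) (γ : ℂ⟦X⟧) (s : ℕ) :
    psComp (∏ i ∈ range (s + 1), psComp γ (iterComp χ i)) φ =
      psComp γ φ * psComp (∏ i ∈ range s, psComp γ (iterComp χ i)) u := by
  rw [psComp_prod hφ, psComp_prod hu, prod_range_succ', mul_comm]
  congr 1
  · rw [iterComp, psComp_X_right]
  · refine prod_congr rfl fun i _ ↦ ?_
    rw [psComp_assoc (constantCoeff_iterComp _) hφ, psComp_iterComp_succ hχ hφ hχφ,
      psComp_assoc (constantCoeff_iterComp _) hu]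

def orbitSeries (χ γ : ℂ⟦X⟧) (s k : ℕ) : ℂ⟦X⟧ :=
  iterComp χ s ^ k * (∏ i ∈ range s, psComp γ (iterComp χ i))⁻¹

theorem psComp_orbitSeries_succ_mul (hχ : constantCoeff χ = 0) (hφ : constantCoeff φ = 0)
    (hu : constantCoeff u = 0) (hχφ : psComp χ φ = u) {γ g : ℂ⟦X⟧} (hγφ : psComp γ φ = g)
    (hg : constantCoeff g ≠ 0) (s k : ℕ) :
    psComp (orbitSeries χ γ (s + 1) k) φ * g = psComp (orbitSeries χ γ s k) u := by
  have hprod (t : ℕ) : constantCoeff (∏ i ∈ range t, psComp γ (iterComp χ i)) ≠ 0 := by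
    rw [map_prod]
    refine prod_ne_zero_iff.2 fun i _ ↦ ?_
    rwa [constantCoeff_psComp, ← constantCoeff_psComp γ φ, hγφ]
  rw [orbitSeries, orbitSeries, psComp_mul hφ, psComp_pow hφ, psComp_inv hφ (hprod _),
    psComp_iterComp_succ hχ hφ hχφ, psComp_prod_psComp_iterComp hχ hφ hu hχφ, hγφ,
    psComp_mul hu, psComp_pow hu, psComp_inv hu (hprod _), PowerSeries.mul_inv_rev, mul_assoc,
    mul_assoc, PowerSeries.inv_mul_cancel g hg, mul_one]

theorem sum_coeff_orbitSeries_succ_mul {h γ g : ℂ⟦X⟧} (hχ : constantCoeff χ = 0)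
    (hφ : constantCoeff φ = 0) (hh : constantCoeff h ≠ 0) (hχφ : psComp χ φ = X * h⁻¹)
    (hγφ : psComp γ φ = g) (hg : constantCoeff g ≠ 0) (s k n : ℕ) :
    ∑ l ∈ range (n + 2), coeff l (orbitSeries χ γ (s + 1) k) *
        coeff n (h ^ (n + 1) * d⁄dX ℂ (φ ^ l * g)) =
      (n + 1) * coeff (n + 1) (orbitSeries χ γ s k) := by
  have hu : constantCoeff (X * h⁻¹) = 0 := by simp
  rw [← coeff_mul_derivative_subst_mul hφ, ← psComp_eq_subst hφ,
    psComp_orbitSeries_succ_mul hχ hφ hu hχφ hγφ hg, psComp_eq_subst hu,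
    coeff_pow_mul_derivative_subst_X_mul_inv hh]

end Iteration

section Matrices

theorem triMul_assoc (L M N : ℕ → ℕ → ℂ) : triMul (triMul L M) N = triMul L (triMul M N) := by
  funext k n
  simp only [triMul, sum_mul, mul_sum]
  rw [sum_comm' (t' := Icc k n) (s' := fun l ↦ Icc l n)]
  · simp only [mul_assoc]
  · intro j l
    simp only [mem_Icc]
    omega

theorem triMul_triId (M : ℕ → ℕ → ℂ) {k n : ℕ} (hkn : k ≤ n) : triMul M triId k n = M k n := by
  rw [triMul, sum_eq_single_of_mem n (mem_Icc.2 ⟨hkn, le_rfl⟩)]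
  · simp [triId]
  · intro j _ hjn
    simp [triId, hjn]

theorem triMul_congr_left {L L' : ℕ → ℕ → ℂ} (N : ℕ → ℕ → ℂ) {k n : ℕ}
    (h : ∀ j, k ≤ j → j ≤ n → L k j = L' k j) : triMul L N k n = triMul L' N k n :=
  sum_congr rfl fun j hj ↦ by rw [h j (mem_Icc.1 hj).1 (mem_Icc.1 hj).2]

theorem triPow_eq_of_triMul_eq {A B : ℕ → ℕ → ℂ} (M : ℕ → ℕ → ℕ → ℂ)
    (hAB : ∀ k n, 1 ≤ k → 1 ≤ n → triMul A B k n = triId k n)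
    (hM0 : ∀ k n, 1 ≤ k → k ≤ n → M 0 k n = triId k n)
    (hM : ∀ s k n, 1 ≤ k → k ≤ n → triMul (M (s + 1)) A k n = M s k n)
    (s : ℕ) {k n : ℕ} (hk : 1 ≤ k) (hkn : k ≤ n) : triPow B s k n = M s k n := by
  induction s generalizing n with
  | zero => exact (hM0 k n hk hkn).symm
  | succ s ih =>
    calc triPow B (s + 1) k n = triMul (M s) B k n := triMul_congr_left B fun j hkj _ ↦ ih hkj
      _ = triMul (triMul (M (s + 1)) A) B k n :=
          triMul_congr_left B fun j hkj _ ↦ (hM s k j hk hkj).symm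
      _ = triMul (M (s + 1)) triId k n := by
          rw [triMul_assoc]
          exact sum_congr rfl fun l hl ↦ by
            rw [hAB l n (hk.trans (mem_Icc.1 hl).1) (hk.trans hkn)]
      _ = M (s + 1) k n := triMul_triId _ hkn

end Matrices

section Entries

def orbitEntry (a : ℕ → ℂ) (χ γ : ℂ⟦X⟧) (s k n : ℕ) : ℂ :=
  a k / a n * (1 / k.factorial) * (n.factorial * coeff n (orbitSeries χ γ s k))

variable {a : ℕ → ℂ}

theorem orbitEntry_zero (ha : ∀ n, 1 ≤ n → a n ≠ 0) (χ γ : ℂ⟦X⟧) {k n : ℕ} (hk : 1 ≤ k) :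
    orbitEntry a χ γ 0 k n = triId k n := by
  rcases eq_or_ne k n with rfl | hkn
  · have hak := ha k hk
    simp [orbitEntry, orbitSeries, iterComp, triId, hak, Nat.factorial_ne_zero]
  · simp [orbitEntry, orbitSeries, iterComp, triId, coeff_X_pow, hkn, Ne.symm hkn]

theorem triMul_orbitEntry_succ (ha : ∀ n, 1 ≤ n → a n ≠ 0) {A : ℕ → ℕ → ℂ} {φ g h χ γ : ℂ⟦X⟧}
    (hA : ∀ k n, 1 ≤ k → k ≤ n →
      A k n = a k / a n * (1 / k.factorial) *
        (((n - 1).factorial : ℂ) * coeff (n - 1) (h ^ n * d⁄dX ℂ (φ ^ k * g))))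
    (hχ : constantCoeff χ = 0) (hφ : constantCoeff φ = 0) (hh : constantCoeff h ≠ 0)
    (hχφ : psComp χ φ = X * h⁻¹) (hγφ : psComp γ φ = g) (hg : constantCoeff g ≠ 0)
    (s : ℕ) {k n : ℕ} (hk : 1 ≤ k) (hkn : k ≤ n) :
    triMul (orbitEntry a χ γ (s + 1)) A k n = orbitEntry a χ γ s k n := by
  obtain ⟨m, rfl⟩ : ∃ m, n = m + 1 := ⟨n - 1, by omega⟩
  set c := fun l ↦ coeff l (orbitSeries χ γ (s + 1) k) *
    coeff m (h ^ (m + 1) * d⁄dX ℂ (φ ^ l * g))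
  have hterm : ∀ l ∈ Icc k (m + 1), orbitEntry a χ γ (s + 1) k l * A l (m + 1) =
      a k / a (m + 1) * (1 / k.factorial) * m.factorial * c l := by
    intro l hl
    have hl' := mem_Icc.1 hl
    have hal := ha l (hk.trans hl'.1)
    have hlf : (l.factorial : ℂ) ≠ 0 := Nat.cast_ne_zero.2 l.factorial_ne_zero
    rw [orbitEntry, hA l _ (hk.trans hl'.1) hl'.2, Nat.add_sub_cancel]
    simp only [c]
    field_simp
  have hext : ∑ l ∈ Icc k (m + 1), c l = ∑ l ∈ range (m + 2), c l := by
    refine sum_subset (fun l hl ↦ mem_range.2 (by have := mem_Icc.1 hl; omega))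
      fun l hl hl' ↦ ?_
    have hlk : l < k := by
      rw [mem_Icc] at hl'
      have := mem_range.1 hl
      omega
    simp only [c, orbitSeries, coeff_pow_mul_eq_zero_of_lt (constantCoeff_iterComp _) _ hlk,
      zero_mul]
  rw [triMul, sum_congr rfl hterm, ← mul_sum, hext,
    sum_coeff_orbitSeries_succ_mul hχ hφ hh hχφ hγφ hg, orbitEntry, Nat.factorial_succ]
  push_cast
  ring

end Entries

theorem stmt3_general (a : ℕ → ℂ) (ha : ∀ n, 1 ≤ n → a n ≠ 0)
    (φ g h : PowerSeries ℂ)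
    (hφ0 : constantCoeff φ = 0)
    (hne : constantCoeff (derivativeFun φ) * constantCoeff g * constantCoeff h ≠ 0)
    (ψ : PowerSeries ℂ) (hψ0 : constantCoeff ψ = 0)
    (hψφ : psComp ψ φ = PowerSeries.X)
    (A B : ℕ → ℕ → ℂ)
    (hA : ∀ k n, 1 ≤ k → k ≤ n →
      A k n = a k / a n * (1 / k.factorial) *
        (((n - 1).factorial : ℂ) * coeff (n - 1) (h ^ n * derivativeFun (φ ^ k * g))))
    (hAB : ∀ k n, 1 ≤ k → 1 ≤ n → triMul A B k n = triId k n)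
    (s : ℕ) (k n : ℕ) (hk : 1 ≤ k) (hkn : k ≤ n) :
    triPow B s k n = a k / a n * (1 / k.factorial) *
      ((n.factorial : ℂ) * coeff n ((iterComp (ψ * (psComp h ψ)⁻¹) s) ^ k *
        (∏ i ∈ Finset.range s,
          psComp (psComp g ψ) (iterComp (ψ * (psComp h ψ)⁻¹) i))⁻¹)) := by
  have hg : constantCoeff g ≠ 0 := fun h0 ↦ hne (by rw [h0]; ring)
  have hh : constantCoeff h ≠ 0 := fun h0 ↦ hne (by rw [h0]; ring)
  have hχ : constantCoeff (ψ * (psComp h ψ)⁻¹) = 0 := by rw [map_mul, hψ0, zero_mul]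
  exact triPow_eq_of_triMul_eq (orbitEntry a _ _) hAB (fun _ _ hk _ ↦ orbitEntry_zero ha _ _ hk)
    (fun s _ _ hk hkn ↦ triMul_orbitEntry_succ ha hA hχ hφ0 hh
      (psComp_mul_inv_psComp_of_psComp_eq_X hψ0 hφ0 hψφ hh)
      (psComp_psComp_of_psComp_eq_X hψ0 hφ0 hψφ g) hg s hk hkn) s hk hkn

/-- Theorem: with `ψ = φ^⟨-1⟩`, `χ = ψ/(h∘ψ)`, and `B` an upper triangular two-sided
inverse of `A`, the `s`-th power of `B` (i.e. `A^{-s}`) has entries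
`[B^s]_{k,n} = (a_k/a_n)·(1/k!)·(d/dt)^n_{t=0}[(χ^⟨s⟩(t))^k · (∏_{i=0}^{s-1} g(ψ(χ^⟨i⟩(t))))^{-1}]`. -/
theorem stmt3 (a : ℕ → ℂ) (ha : ∀ n, 1 ≤ n → a n ≠ 0)
    (φ g h : PowerSeries ℂ)
    (hφ0 : constantCoeff φ = 0)
    (hne : constantCoeff (derivativeFun φ) * constantCoeff g * constantCoeff h ≠ 0)
    (ψ : PowerSeries ℂ) (hψ0 : constantCoeff ψ = 0)
    (hψφ : psComp ψ φ = PowerSeries.X) (hφψ : psComp φ ψ = PowerSeries.X)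
    (A B : ℕ → ℕ → ℂ)
    (hAtri : ∀ k n, n < k → A k n = 0)
    (hBtri : ∀ k n, n < k → B k n = 0)
    (hA : ∀ k n, 1 ≤ k → k ≤ n →
      A k n = a k / a n * (1 / k.factorial) *
        (((n - 1).factorial : ℂ) * coeff (n - 1) (h ^ n * derivativeFun (φ ^ k * g))))
    (hAB : ∀ k n, 1 ≤ k → 1 ≤ n → triMul A B k n = triId k n)
    (hBA : ∀ k n, 1 ≤ k → 1 ≤ n → triMul B A k n = triId k n)
    (s : ℕ) (k n : ℕ) (hk : 1 ≤ k) (hkn : k ≤ n) :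
    triPow B s k n = a k / a n * (1 / k.factorial) *
      ((n.factorial : ℂ) * coeff n ((iterComp (ψ * (psComp h ψ)⁻¹) s) ^ k *
        (∏ i ∈ Finset.range s,
          psComp (psComp g ψ) (iterComp (ψ * (psComp h ψ)⁻¹) i))⁻¹)) :=
  stmt3_general a ha φ g h hφ0 hne ψ hψ0 hψφ A B hA hAB s k n hk hkn
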